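/- If T is (n,0)-quasi-*-paranormal (i.e., n-*-paranormal) or (n,1)-quasi-*-paranormal, then T is normaloid: ‖T‖ equals the spectral radius r(T). -/

import Mathlib

open ContinuousLinearMap Filter
open scoped InnerProductSpace

/-!
Cauchy–Schwarz gives `‖T x‖ ^ 2 ≤ ‖T† (T x)‖ * ‖x‖`, which turns `(n, 1)`-quasi-*-paranormality
into `(n + 1)`-paranormality; the `(n, 0)` case implies the `(n, 1)` case by evaluating at `T x`.
For an `m`-paranormal `T`, the inequality at `T ^ (j * m) x` gives inductively
`‖T ^ (1 + j * m)‖ = ‖T‖ ^ (1 + j * m)`, and Gelfand's formula along this subsequence gives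
`r(T) = ‖T‖`.
-/

section Paranormal

variable {𝕜 E : Type*} [NontriviallyNormedField 𝕜] [NormedAddCommGroup E] [NormedSpace 𝕜 E]

theorem ContinuousLinearMap.norm_pow_apply_le (T : E →L[𝕜] E) (k : ℕ) (x : E) :
    ‖(T ^ k) x‖ ≤ ‖T‖ ^ k * ‖x‖ := by
  simpa [FunLike.coe_pow_eq_iterate] using (T.lipschitz.iterate k).norm_le_mul (by simp) x

theorem ContinuousLinearMap.opNorm_pow_le_of_norm_apply_pow_le {F : Type*} [NormedAddCommGroup F]
    [NormedSpace 𝕜 F] (S : E →L[𝕜] F) {k : ℕ} (hk : k ≠ 0) {C : ℝ} (hC : 0 ≤ C)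
    (h : ∀ x, ‖S x‖ ^ k ≤ C * ‖x‖ ^ k) : ‖S‖ ^ k ≤ C := by
  have hroot : (C ^ (k⁻¹ : ℝ)) ^ k = C := Real.rpow_inv_natCast_pow hC hk
  have hS : ‖S‖ ≤ C ^ (k⁻¹ : ℝ) := S.opNorm_le_bound (by positivity) fun x => by
    rw [← pow_le_pow_iff_left₀ (norm_nonneg _) (by positivity) hk, mul_pow, hroot]
    exact h x
  calc ‖S‖ ^ k ≤ (C ^ (k⁻¹ : ℝ)) ^ k := by gcongr
    _ = C := hroot

def IsParanormal (m : ℕ) (T : E →L[𝕜] E) : Prop :=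
  ∀ x : E, ‖T x‖ ^ (m + 1) ≤ ‖(T ^ (m + 1)) x‖ * ‖x‖ ^ m

theorem IsParanormal.norm_pow_eq {m : ℕ} {T : E →L[𝕜] E} (hT : IsParanormal m T) (j : ℕ) :
    ‖T ^ (1 + j * m)‖ = ‖T‖ ^ (1 + j * m) := by
  induction j with
  | zero => simp
  | succ j ih =>
    refine le_antisymm (norm_pow_le' T (by omega)) ?_
    rcases (norm_nonneg T).eq_or_lt with h0 | hpos
    · rw [← h0, zero_pow (by omega)]
      exact norm_nonneg _
    have hstep : ‖T ^ (1 + j * m)‖ ^ (m + 1) ≤ ‖T ^ (1 + (j + 1) * m)‖ * ‖T‖ ^ (j * m * m) := by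
      refine opNorm_pow_le_of_norm_apply_pow_le _ (by omega) (by positivity) fun x => ?_
      have e1 : (T ^ (1 + j * m)) x = T ((T ^ (j * m)) x) := by rw [pow_add, pow_one, mul_apply_eq_comp]
      have e2 : (T ^ (m + 1)) ((T ^ (j * m)) x) = (T ^ (1 + (j + 1) * m)) x := by
        rw [← mul_apply_eq_comp, ← pow_add]
        congr 2
        ring
      calc ‖(T ^ (1 + j * m)) x‖ ^ (m + 1)
          ≤ ‖(T ^ (m + 1)) ((T ^ (j * m)) x)‖ * ‖(T ^ (j * m)) x‖ ^ m := e1 ▸ hT _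
        _ ≤ (‖T ^ (1 + (j + 1) * m)‖ * ‖x‖) * (‖T‖ ^ (j * m) * ‖x‖) ^ m := by
          rw [e2]
          gcongr
          · exact le_opNorm _ _
          · exact norm_pow_apply_le T _ x
        _ = ‖T ^ (1 + (j + 1) * m)‖ * ‖T‖ ^ (j * m * m) * ‖x‖ ^ (m + 1) := by ring
    rw [ih] at hstep
    refine le_of_mul_le_mul_right ?_ (pow_pos hpos (j * m * m))
    calc ‖T‖ ^ (1 + (j + 1) * m) * ‖T‖ ^ (j * m * m) = (‖T‖ ^ (1 + j * m)) ^ (m + 1) := by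
          rw [← pow_add, ← pow_mul]
          ring_nf
      _ ≤ _ := hstep

end Paranormal

theorem spectralRadius_eq_nnnorm_of_norm_pow_eq {A : Type*} [NormedRing A] [NormedAlgebra ℂ A]
    [CompleteSpace A] {a : A} {k : ℕ → ℕ} (hk : Tendsto k atTop atTop)
    (h : ∀ j, ‖a ^ k j‖ = ‖a‖ ^ k j) : spectralRadius ℂ a = ‖a‖₊ := by
  refine tendsto_nhds_unique
    ((spectrum.pow_nnnorm_pow_one_div_tendsto_nhds_spectralRadius a).comp hk)
    (tendsto_const_nhds.congr' ?_)
  filter_upwards [hk.eventually_ne_atTop 0] with j hj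
  have hnn : ‖a ^ k j‖₊ = ‖a‖₊ ^ k j := NNReal.eq (by simpa using h j)
  rw [Function.comp_apply, hnn, ENNReal.coe_pow, ← ENNReal.rpow_natCast, ← ENNReal.rpow_mul,
    mul_one_div_cancel (by exact_mod_cast hj), ENNReal.rpow_one]

theorem IsParanormal.spectralRadius_eq {E : Type*} [NormedAddCommGroup E] [NormedSpace ℂ E]
    [CompleteSpace E] {m : ℕ} (hm : m ≠ 0) {T : E →L[ℂ] E} (hT : IsParanormal m T) :
    spectralRadius ℂ T = ‖T‖₊ := by
  refine spectralRadius_eq_nnnorm_of_norm_pow_eq (k := fun j => 1 + j * m)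
    (tendsto_atTop_mono (fun j => ?_) tendsto_id) hT.norm_pow_eq
  have := Nat.le_mul_of_pos_right j (Nat.pos_of_ne_zero hm)
  simp only [id]
  omega

section QuasiStarParanormal

variable {𝕜 E : Type*} [RCLike 𝕜] [NormedAddCommGroup E] [InnerProductSpace 𝕜 E] [CompleteSpace E]

def IsQuasiStarParanormal (n k : ℕ) (T : E →L[𝕜] E) : Prop :=
  ∀ x : E, ‖adjoint T ((T ^ k) x)‖ ^ (n + 1) ≤ ‖(T ^ (n + 1)) ((T ^ k) x)‖ * ‖(T ^ k) x‖ ^ n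

theorem IsQuasiStarParanormal.succ {n k : ℕ} {T : E →L[𝕜] E} (hT : IsQuasiStarParanormal n k T) :
    IsQuasiStarParanormal n (k + 1) T := fun x => by
  rw [pow_succ T k, mul_apply_eq_comp]
  exact hT (T x)

theorem ContinuousLinearMap.norm_apply_sq_le_norm_adjoint_apply_mul_norm {F : Type*}
    [NormedAddCommGroup F] [InnerProductSpace 𝕜 F] [CompleteSpace F] (T : E →L[𝕜] F) (x : E) :
    ‖T x‖ ^ 2 ≤ ‖adjoint T (T x)‖ * ‖x‖ :=
  calc ‖T x‖ ^ 2 = RCLike.re ⟪(adjoint T ∘L T) x, x⟫_𝕜 := apply_norm_sq_eq_inner_adjoint_left T x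
    _ ≤ ‖⟪(adjoint T ∘L T) x, x⟫_𝕜‖ := RCLike.re_le_norm _
    _ ≤ ‖adjoint T (T x)‖ * ‖x‖ := norm_inner_le_norm _ _

theorem IsQuasiStarParanormal.isParanormal {n : ℕ} {T : E →L[𝕜] E}
    (hT : IsQuasiStarParanormal n 1 T) : IsParanormal (n + 1) T := by
  intro x
  rcases (norm_nonneg (T x)).eq_or_lt with h0 | hpos
  · rw [← h0, zero_pow (by omega)]
    positivity
  refine le_of_mul_le_mul_right ?_ (pow_pos hpos n)
  calc ‖T x‖ ^ (n + 1 + 1) * ‖T x‖ ^ n = (‖T x‖ ^ 2) ^ (n + 1) := by ring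
    _ ≤ (‖adjoint T (T x)‖ * ‖x‖) ^ (n + 1) := by
      gcongr
      exact T.norm_apply_sq_le_norm_adjoint_apply_mul_norm x
    _ = ‖adjoint T (T x)‖ ^ (n + 1) * ‖x‖ ^ (n + 1) := mul_pow _ _ _
    _ ≤ ‖(T ^ (n + 1)) (T x)‖ * ‖T x‖ ^ n * ‖x‖ ^ (n + 1) := by
      gcongr
      simpa only [pow_one] using hT x
    _ = ‖(T ^ (n + 1 + 1)) x‖ * ‖x‖ ^ (n + 1) * ‖T x‖ ^ n := by
      rw [pow_succ _ (n + 1), mul_apply_eq_comp]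
      ring

end QuasiStarParanormal

/-- If `T` is `(n,0)`-quasi-*-paranormal (i.e. `n`-*-paranormal) or `(n,1)`-quasi-*-paranormal,
then `T` is normaloid: its norm equals its spectral radius. -/
theorem stmt_19 {H : Type*} [NormedAddCommGroup H] [InnerProductSpace ℂ H] [CompleteSpace H]
    (T : H →L[ℂ] H) (n : ℕ)
    (hT : (∀ x : H, ‖adjoint T (T ^ 0 <| x)‖ ^ (n + 1) ≤
        ‖T ^ (n + 1) <| T ^ 0 <| x‖ * ‖T ^ 0 <| x‖ ^ n)
      ∨ (∀ x : H, ‖adjoint T (T ^ 1 <| x)‖ ^ (n + 1) ≤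
        ‖T ^ (n + 1) <| T ^ 1 <| x‖ * ‖T ^ 1 <| x‖ ^ n)) :
    spectralRadius ℂ T = ENNReal.ofReal ‖T‖ := by
  have h1 : IsQuasiStarParanormal n 1 T := hT.elim IsQuasiStarParanormal.succ id
  rw [h1.isParanormal.spectralRadius_eq n.succ_ne_zero, ofReal_norm, enorm_eq_nnnorm]
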